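/- arXiv:1912.11617 — 3 statements merged into one kernel-verified Lean document; each statement's English description precedes it below -/
import Mathlib

section
/- Let f and g be nonzero polynomials over F₂ and let s be a binary sequence that has period dividing some N > 0. If f generates s and g generates s, then gcd(f, g) also generates s, i.e., (gcd(f,g))(E)s = 0. -/
open Polynomial

noncomputable def polyApp (f : Polynomial (ZMod 2)) (s : ℕ → ZMod 2) : ℕ → ZMod 2 :=
  fun i => f.sum fun j c => c * s (i + j)

noncomputable def shiftL : (ℕ → ZMod 2) →ₗ[ZMod 2] (ℕ → ZMod 2) where
  toFun s := fun i => s (i + 1)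
  map_add' _ _ := rfl
  map_smul' _ _ := rfl

lemma shiftL_pow (n : ℕ) (s : ℕ → ZMod 2) (i : ℕ) : (shiftL ^ n) s i = s (i + n) := by
  induction n generalizing s with
  | zero => rfl
  | succ n ih =>
    rw [pow_succ, Module.End.mul_apply, ih]
    rfl

lemma polyApp_eq (f : Polynomial (ZMod 2)) (s : ℕ → ZMod 2) :
    polyApp f s = (aeval shiftL f) s := by
  induction f using Polynomial.induction_on' with
  | add p q hp hq =>
    funext i
    have : polyApp (p + q) s i = polyApp p s i + polyApp q s i := by
      unfold polyApp
      rw [Polynomial.sum_add_index] <;> simp [add_mul]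
    rw [this, hp, hq, map_add]
    rfl
  | monomial n a =>
    funext i
    have h1 : polyApp (monomial n a) s i = a * s (i + n) := by
      unfold polyApp
      rw [Polynomial.sum_monomial_index]
      simp
    rw [h1, aeval_monomial]
    show _ = (algebraMap (ZMod 2) (Module.End (ZMod 2) (ℕ → ZMod 2)) a)
        ((shiftL ^ n) s) i
    rw [Module.algebraMap_end_apply]
    simp [shiftL_pow]

theorem gcd_generates (f g : Polynomial (ZMod 2)) (hf : f ≠ 0) (hg : g ≠ 0)
    (s : ℕ → ZMod 2) (N : ℕ) (hN : 0 < N) (hper : ∀ i, s (i + N) = s i)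
    (hfs : polyApp f s = 0) (hgs : polyApp g s = 0) :
    polyApp (EuclideanDomain.gcd f g) s = 0 := by
  rw [polyApp_eq] at hfs hgs ⊢
  rw [EuclideanDomain.gcd_eq_gcd_ab f g, mul_comm f, mul_comm g, map_add, map_mul, map_mul]
  rw [LinearMap.add_apply, Module.End.mul_apply, Module.End.mul_apply, hfs, hgs,
    map_zero, map_zero, add_zero]
end

section
/- Let q ∈ F₂[X] be irreducible and let r be a nonzero binary sequence that has period dividing some N > 0 and is generated by q. Then for any polynomial f ∈ F₂[X] with gcd(q, f) = 1, the sequence f(E)r is nonzero and is generated by q, i.e., f(E)r ≠ 0 and q(E)(f(E)r) = 0. -/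
open Polynomial

noncomputable def shiftE : Module.End (ZMod 2) (ℕ → ZMod 2) where
  toFun s := fun i => s (i + 1)
  map_add' _ _ := rfl
  map_smul' _ _ := rfl

lemma shiftE_pow (j : ℕ) : ∀ (s : ℕ → ZMod 2) (i : ℕ), (shiftE ^ j) s i = s (i + j) := by
  induction j with
  | zero => intro s i; simp
  | succ j ih =>
    intro s i
    rw [pow_succ]
    show (shiftE ^ j) (shiftE s) i = _
    rw [ih]
    show s (i + j + 1) = _
    ring_nf

lemma polyApp_eq_s3 (f : Polynomial (ZMod 2)) (r : ℕ → ZMod 2) :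
    polyApp f r = (Polynomial.aeval shiftE f) r := by
  funext i
  simp [polyApp, Polynomial.aeval_def, Polynomial.eval₂_eq_sum, Polynomial.sum,
    LinearMap.sum_apply, Finset.sum_apply, shiftE_pow, Algebra.smul_def]

theorem coprime_apply_mem (q : Polynomial (ZMod 2)) (hq : Irreducible q)
    (r : ℕ → ZMod 2) (hr : r ≠ 0)
    (N : ℕ) (hN : 0 < N) (hper : ∀ i, r (i + N) = r i)
    (hqr : polyApp q r = 0)
    (f : Polynomial (ZMod 2)) (hgcd : EuclideanDomain.gcd q f = 1) :
    polyApp f r ≠ 0 ∧ polyApp q (polyApp f r) = 0 := by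
  have hq0 : (Polynomial.aeval shiftE q) r = 0 := by rw [← polyApp_eq_s3]; exact hqr
  constructor
  · intro hf0
    have hf0' : (Polynomial.aeval shiftE f) r = 0 := by rw [← polyApp_eq_s3]; exact hf0
    have key := EuclideanDomain.gcd_eq_gcd_ab q f
    rw [hgcd] at key
    apply hr
    have : r = (Polynomial.aeval shiftE (1 : Polynomial (ZMod 2))) r := by simp
    rw [this, key]
    have h1 : q * EuclideanDomain.gcdA q f = EuclideanDomain.gcdA q f * q := mul_comm _ _
    have h2 : f * EuclideanDomain.gcdB q f = EuclideanDomain.gcdB q f * f := mul_comm _ _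
    rw [h1, h2, map_add, map_mul, map_mul, LinearMap.add_apply, Module.End.mul_apply,
      Module.End.mul_apply, hq0, hf0', map_zero, map_zero]
    simp
  · rw [polyApp_eq_s3, polyApp_eq_s3, ← Module.End.mul_apply, ← map_mul, mul_comm q f, map_mul,
      Module.End.mul_apply, hq0, map_zero]
end

section
/- (Generalized shift-and-add property.) Let q be a primitive polynomial of degree k over F₂ and let s be a nonzero binary sequence generated by q (an m-sequence). Then for any polynomial f ∈ F₂[X] with gcd(q, f) = 1, the sequence f(E)s is a cyclic shift of s: there exists j ≥ 0 such that f(E)s = E^j s, i.e., (f(E)s)(i) = s(i+j) for all i. -/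
open Polynomial

def IsExponent (f : Polynomial (ZMod 2)) (e : ℕ) : Prop :=
  0 < e ∧ f ∣ X ^ e - 1 ∧ ∀ m, 0 < m → f ∣ X ^ m - 1 → e ≤ m

def IsPrimitivePoly (f : Polynomial (ZMod 2)) (k : ℕ) : Prop :=
  Irreducible f ∧ f.natDegree = k ∧ f.coeff 0 ≠ 0 ∧ IsExponent f (2 ^ k - 1)

/-!
`f ↦ f(E)` is a ring action of `𝔽₂[X]` on sequences which kills `q`, so `f(E)s` only depends on
`f mod q`. For `q` primitive of degree `k`, the residue field `𝔽₂[X]/(q)` has `2ᵏ` elements and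
`X` has order `2ᵏ - 1` in it, so `X` generates its multiplicative group. If `gcd(q, f) = 1`, then
`f mod q` is a nonzero residue, hence equal to `Xʲ mod q` for some `j`, and `f(E)s = Eʲs`.
-/

section Sequences

variable (f g : (ZMod 2)[X]) (s t : ℕ → ZMod 2)

lemma polyApp_add_left : polyApp (f + g) s = polyApp f s + polyApp g s := by
  funext i
  exact sum_add_index f g _ (fun _ => zero_mul _) (fun _ _ _ => add_mul _ _ _)

lemma polyApp_add_right : polyApp f (s + t) = polyApp f s + polyApp f t := by
  funext i
  simp only [polyApp, Pi.add_apply, mul_add, sum_add]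

lemma polyApp_zero_right : polyApp f 0 = 0 := by
  funext i
  simp [polyApp, Polynomial.sum]

lemma polyApp_monomial (n : ℕ) (a : ZMod 2) :
    polyApp (monomial n a) s = fun i => a * s (i + n) := by
  funext i
  exact sum_monomial_index a _ (zero_mul _)

lemma polyApp_X_pow (n : ℕ) : polyApp (X ^ n) s = fun i => s (i + n) := by
  simp only [X_pow_eq_monomial, polyApp_monomial, one_mul]

lemma polyApp_mul : polyApp (f * g) s = polyApp f (polyApp g s) := by
  induction f using Polynomial.induction_on' with
  | add f₁ f₂ h₁ h₂ => rw [add_mul, polyApp_add_left, polyApp_add_left, h₁, h₂]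
  | monomial n a =>
    induction g using Polynomial.induction_on' with
    | add g₁ g₂ h₁ h₂ =>
      rw [mul_add, polyApp_add_left, h₁, h₂, polyApp_add_left, polyApp_add_right]
    | monomial m b =>
      simp only [monomial_mul_monomial, polyApp_monomial]
      funext i
      rw [add_assoc, mul_assoc]

variable {f g s}

lemma polyApp_eq_of_dvd_sub {q : (ZMod 2)[X]} (hqs : polyApp q s = 0) (hfg : q ∣ f - g) :
    polyApp f s = polyApp g s := by
  obtain ⟨h, hh⟩ := hfg
  rw [show f = g + h * q by rw [mul_comm, ← hh]; ring, polyApp_add_left, polyApp_mul, hqs,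
    polyApp_zero_right, add_zero]

end Sequences

lemma AdjoinRoot.root_pow_eq_one_iff {R : Type*} [CommRing R] {q : R[X]} {m : ℕ} :
    root q ^ m = 1 ↔ q ∣ X ^ m - 1 := by
  rw [← mk_X, ← map_pow, ← map_one (mk q), mk_eq_mk]

lemma AdjoinRoot.natCard_eq_pow_natDegree {K : Type*} [Field K] {q : K[X]} (hq : q ≠ 0) :
    Nat.card (AdjoinRoot q) = Nat.card K ^ q.natDegree := by
  have := (powerBasis hq).finite
  rw [Module.natCard_eq_pow_finrank (K := K), (powerBasis hq).finrank, powerBasis_dim]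

lemma IsExponent.isPrimitiveRoot_root {q : (ZMod 2)[X]} {e : ℕ} (h : IsExponent q e) :
    IsPrimitiveRoot (AdjoinRoot.root q) e := by
  obtain ⟨he, hdvd, hmin⟩ := h
  refine .mk_of_lt _ he (AdjoinRoot.root_pow_eq_one_iff.2 hdvd) fun m hm hme hpow => ?_
  exact (hmin m hm (AdjoinRoot.root_pow_eq_one_iff.1 hpow)).not_gt hme

lemma IsPrimitiveRoot.exists_pow_eq_of_natCard_sub_one {L : Type*} [Field L] [Finite L] {ζ : L}
    (hζ : IsPrimitiveRoot ζ (Nat.card L - 1)) {x : L} (hx : x ≠ 0) : ∃ j, ζ ^ j = x := by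
  have := Fintype.ofFinite L
  have : NeZero (Nat.card L - 1) := ⟨by have := Finite.one_lt_card (α := L); omega⟩
  obtain ⟨j, -, hj⟩ := hζ.eq_pow_of_pow_eq_one (ξ := x)
    (by rw [← Fintype.card_eq_nat_card]; exact FiniteField.pow_card_sub_one_eq_one x hx)
  exact ⟨j, hj⟩

lemma IsPrimitivePoly.exists_dvd_sub_X_pow {q : (ZMod 2)[X]} {k : ℕ} (hq : IsPrimitivePoly q k)
    {f : (ZMod 2)[X]} (hf : ¬ q ∣ f) : ∃ j, q ∣ f - X ^ j := by
  obtain ⟨hirr, hdeg, -, hexp⟩ := hq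
  have := Fact.mk hirr
  have := (AdjoinRoot.powerBasis hirr.ne_zero).finite
  have := Module.finite_of_finite (ZMod 2) (M := AdjoinRoot q)
  have hcard : Nat.card (AdjoinRoot q) = 2 ^ k := by
    rw [AdjoinRoot.natCard_eq_pow_natDegree hirr.ne_zero, Nat.card_zmod, hdeg]
  have hroot := hexp.isPrimitiveRoot_root
  rw [← hcard] at hroot
  have hf0 : AdjoinRoot.mk q f ≠ 0 := mt AdjoinRoot.mk_eq_zero.1 hf
  obtain ⟨j, hj⟩ := hroot.exists_pow_eq_of_natCard_sub_one hf0
  refine ⟨j, AdjoinRoot.mk_eq_mk.1 ?_⟩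
  rw [map_pow, AdjoinRoot.mk_X, hj]

theorem shift_and_add_general (q : Polynomial (ZMod 2)) (k : ℕ) (hq : IsPrimitivePoly q k)
    (s : ℕ → ZMod 2) (hqs : polyApp q s = 0)
    (f : Polynomial (ZMod 2)) (hgcd : EuclideanDomain.gcd q f = 1) :
    ∃ j : ℕ, ∀ i, polyApp f s i = s (i + j) := by
  have hqf : ¬ q ∣ f := fun h =>
    hq.1.not_isUnit (isUnit_of_dvd_one (hgcd ▸ EuclideanDomain.dvd_gcd dvd_rfl h))
  obtain ⟨j, hj⟩ := hq.exists_dvd_sub_X_pow hqf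
  exact ⟨j, fun i => by rw [polyApp_eq_of_dvd_sub hqs hj, polyApp_X_pow]⟩

/-- Generalized shift-and-add property for m-sequences. -/
theorem shift_and_add (q : Polynomial (ZMod 2)) (k : ℕ) (hq : IsPrimitivePoly q k)
    (s : ℕ → ZMod 2) (hs : s ≠ 0) (hqs : polyApp q s = 0)
    (f : Polynomial (ZMod 2)) (hgcd : EuclideanDomain.gcd q f = 1) :
    ∃ j : ℕ, ∀ i, polyApp f s i = s (i + j) :=
  shift_and_add_general q k hq s hqs f hgcd
end
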